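/- Let G be a nontrivial finite abelian group, F_q a finite field of characteristic p with p ∤ |G|, C = F_q G · e a minimal ideal (e a primitive idempotent), and w ∈ G of order exp(G). Then |G| / t_w ≤ d(C), where d(C) is the minimum Hamming weight of nonzero elements of C and t_w is the least positive integer a with w^(q^a)=w. -/

import Mathlib

/-!
Since `w` has maximal order, `g ^ q ^ tw = g` for all `g ∈ G`, so the `tw`-th power of the
Frobenius `x ↦ x ^ q` is the identity of `F[G]`. The minimal ideal `C = F[G] e` embeds into the
residue field `F[G] ⧸ (1 - e)`, where the Frobenius has order equal to the degree over `F`; hence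
`dim C ≤ tw`. The translates `g c` of a nonzero `c ∈ C` lie in `C`, so at most `tw` of them span
all of them, and the supports of these `tw` translates, each of size `wt c`, cover `G`.
-/

open Module MonoidAlgebra Finset Submodule

theorem pow_eq_self_of_orderOf_eq_exponent {G : Type*} [LeftCancelMonoid G] {w : G}
    (hw : orderOf w = Monoid.exponent G) {m : ℕ} (hwm : w ^ m = w) (g : G) : g ^ m = g := by
  have hm : m ≡ 1 [MOD Monoid.exponent G] := hw ▸ pow_eq_pow_iff_modEq.1 (by rwa [pow_one])
  simpa using pow_eq_pow_iff_modEq.2 (hm.of_dvd (Monoid.order_dvd_exponent g))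

theorem MonoidAlgebra.pow_card_pow_eq_self {F G : Type*} [Field F] [Fintype F] [CommMonoid G]
    {n : ℕ} (hG : ∀ g : G, g ^ Fintype.card F ^ n = g) (x : MonoidAlgebra F G) :
    x ^ Fintype.card F ^ n = x := by
  have hfrob : FiniteField.frobeniusAlgHom F (MonoidAlgebra F G) ^ n = 1 :=
    MonoidAlgebra.algHom_ext (fun g => by
      simp [AlgHom.coe_pow, FiniteField.coe_frobeniusAlgHom, pow_iterate, single_pow, hG])
      (Subsingleton.elim _ _)
  simpa [AlgHom.coe_pow, FiniteField.coe_frobeniusAlgHom, pow_iterate] using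
    congr($hfrob x)

theorem FiniteField.finrank_le_of_forall_pow_card_pow_eq_self {K L : Type*} [Field K] [Fintype K]
    [Field L] [Algebra K L] [Finite L] {n : ℕ} (hn : 0 < n)
    (h : ∀ x : L, x ^ Fintype.card K ^ n = x) : finrank K L ≤ n :=
  orderOf_frobeniusAlgHom K L ▸ orderOf_le_of_pow_eq_one hn
    (AlgHom.ext fun x => by simp [AlgHom.coe_pow, coe_frobeniusAlgHom, pow_iterate, h])

namespace IsIdempotentElem

variable {R : Type*} [CommRing R] {e : R}

theorem mem_span_one_sub_iff (he : IsIdempotentElem e) {x : R} :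
    x ∈ Ideal.span {1 - e} ↔ x * e = 0 := by
  rw [← he.ker_toSpanSingleton_eq_span, LinearMap.mem_ker, LinearMap.toSpanSingleton_apply,
    smul_eq_mul]

theorem isMaximal_span_one_sub (he : IsIdempotentElem e) (hmin : IsAtom (Ideal.span {e})) :
    (Ideal.span {1 - e}).IsMaximal := by
  refine Ideal.isMaximal_iff.2 ⟨fun h1 => ?_, fun J x hle hx hxJ => ?_⟩
  · rw [he.mem_span_one_sub_iff, one_mul] at h1
    exact hmin.1 (by simp [h1])
  · have hxe : Ideal.span {x * e} = Ideal.span {e} :=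
      (hmin.le_iff.1 (Ideal.span_singleton_le_span_singleton.2 (dvd_mul_left e x))).resolve_left
        (by simpa [he.mem_span_one_sub_iff] using hx)
    obtain ⟨r, hr⟩ := Ideal.mem_span_singleton.1 (hxe ▸ Ideal.mem_span_singleton_self e)
    have heJ : e ∈ J := hr ▸ J.mul_mem_right r (J.mul_mem_right e hxJ)
    simpa using J.add_mem (hle (Ideal.mem_span_singleton_self (1 - e))) heJ

theorem finrank_span_le_finrank_quotient {K : Type*} [Field K] [Algebra K R] [Module.Finite K R]
    (he : IsIdempotentElem e) :
    finrank K ((Ideal.span {e}).restrictScalars K) ≤ finrank K (R ⧸ Ideal.span {1 - e}) := by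
  refine LinearMap.finrank_le_finrank_of_injective
    (f := (Ideal.Quotient.mkₐ K _).toLinearMap ∘ₗ Submodule.subtype _) ?_
  refine (injective_iff_map_eq_zero _).2 fun ⟨x, hx⟩ hx0 => ?_
  obtain ⟨a, rfl⟩ := Ideal.mem_span_singleton'.1 hx
  have hae : a * e * e = 0 := he.mem_span_one_sub_iff.1 (Ideal.Quotient.eq_zero_iff_mem.1 hx0)
  ext
  simpa [mul_assoc, he.eq] using hae

theorem finrank_span_le_of_isAtom {F : Type*} [Field F] [Fintype F] [Algebra F R]
    [Module.Finite F R] (he : IsIdempotentElem e) (hmin : IsAtom (Ideal.span {e})) {n : ℕ}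
    (hn : 0 < n) (hR : ∀ x : R, x ^ Fintype.card F ^ n = x) :
    finrank F ((Ideal.span {e}).restrictScalars F) ≤ n := by
  have := he.isMaximal_span_one_sub hmin
  let := Ideal.Quotient.field (Ideal.span {1 - e})
  have := Module.finite_of_finite F (M := R ⧸ Ideal.span {1 - e})
  refine he.finrank_span_le_finrank_quotient.trans
    (FiniteField.finrank_le_of_forall_pow_card_pow_eq_self hn fun y => ?_)
  obtain ⟨x, rfl⟩ := Ideal.Quotient.mk_surjective y
  rw [← map_pow, hR]

end IsIdempotentElem

theorem MonoidAlgebra.support_subset_biUnion_of_mem_span {R G : Type*} [Semiring R] [DecidableEq G]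
    {s : Finset (MonoidAlgebra R G)} {x : MonoidAlgebra R G} (hx : x ∈ span R (s : Set _)) :
    x.coeff.support ⊆ s.biUnion fun v => v.coeff.support := by
  set U := s.biUnion fun v => v.coeff.support
  have hspan : span R (s : Set (MonoidAlgebra R G)) ≤
      (Finsupp.supported R R (U : Set G)).comap (coeffLinearEquiv R).toLinearMap :=
    span_le.2 fun v hv => by
      simpa only [SetLike.mem_coe, mem_comap, LinearEquiv.coe_coe, coeffLinearEquiv_apply,
        Finsupp.mem_supported, coe_subset] using
        subset_biUnion_of_mem (fun v : MonoidAlgebra R G => v.coeff.support) hv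
  simpa only [mem_comap, LinearEquiv.coe_coe, coeffLinearEquiv_apply, Finsupp.mem_supported,
    coe_subset] using hspan hx

theorem MonoidAlgebra.card_le_finrank_span_translates_mul_card_support {F G : Type*} [Field F]
    [Group G] [Fintype G] {c : MonoidAlgebra F G} (hc : c ≠ 0) :
    Fintype.card G ≤
      finrank F (span F (Set.range fun g : G => single g (1 : F) * c)) * #c.coeff.support := by
  classical
  set t : G → MonoidAlgebra F G := fun g => single g 1 * c
  obtain ⟨b, hbt, hspan, hb⟩ := exists_linearIndependent F (Set.range t)
  have hbfin : b.Finite := (Set.finite_range t).subset hbt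
  set B := hbfin.toFinset
  have hB : (B : Set _) = b := hbfin.coe_toFinset
  obtain ⟨h, hh⟩ : c.coeff.support.Nonempty := by simpa using hc
  have hcover : (univ : Finset G) ⊆ B.biUnion fun v => v.coeff.support := fun g _ =>
    support_subset_biUnion_of_mem_span (x := t (g * h⁻¹))
      (by rw [hB, hspan]; exact subset_span ⟨_, rfl⟩) (by simpa [t] using hh)
  calc Fintype.card G ≤ #(B.biUnion fun v => v.coeff.support) := card_le_card hcover
    _ ≤ #B * #c.coeff.support := card_biUnion_le_card_mul _ _ _ fun v hv => by
        obtain ⟨g, rfl⟩ := hbt (hbfin.mem_toFinset.1 hv)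
        simp [t, support_coeff_single_mul]
    _ = _ := by rw [← hspan, ← hB, finrank_span_finset_eq_card (by rwa [hB])]

theorem minimal_code_min_distance_bound_general
    (F : Type*) [Field F] [Fintype F]
    (q : ℕ) (hq : Fintype.card F = q)
    (G : Type*) [CommGroup G] [Fintype G]
    (e : MonoidAlgebra F G) (he : IsIdempotentElem e)
    (C : Ideal (MonoidAlgebra F G)) (hC : C = Ideal.span {e})
    (hmin : IsAtom C)
    (w : G) (hw : orderOf w = Monoid.exponent G)
    (tw : ℕ) (htw : IsLeast {a : ℕ | 0 < a ∧ w ^ q ^ a = w} tw) :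
    ∀ c ∈ C, c ≠ 0 → (Fintype.card G : ℝ) / (tw : ℝ) ≤ (c.coeff.support.card : ℝ) := by
  intro c hc hc0
  obtain ⟨⟨htw0, hwtw⟩, -⟩ := htw
  subst hq hC
  have hdim : finrank F ((Ideal.span {e}).restrictScalars F) ≤ tw :=
    he.finrank_span_le_of_isAtom hmin htw0
      (pow_card_pow_eq_self (pow_eq_self_of_orderOf_eq_exponent hw hwtw))
  have htranslates : span F (Set.range fun g : G => single g (1 : F) * c) ≤
      (Ideal.span {e}).restrictScalars F :=
    span_le.2 (Set.range_subset_iff.2 fun g => Ideal.mul_mem_left _ _ hc)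
  have hcard : Fintype.card G ≤ tw * #c.coeff.support :=
    (card_le_finrank_span_translates_mul_card_support hc0).trans
      (Nat.mul_le_mul_right _ ((finrank_mono htranslates).trans hdim))
  rw [div_le_iff₀ (by exact_mod_cast htw0), mul_comm]
  exact_mod_cast hcard

theorem minimal_code_min_distance_bound
    (p : ℕ) [Fact p.Prime]
    (F : Type*) [Field F] [Fintype F] [CharP F p]
    (q : ℕ) (hq : Fintype.card F = q)
    (G : Type*) [CommGroup G] [Fintype G] [Nontrivial G]
    (hG : ¬ p ∣ Fintype.card G)
    (e : MonoidAlgebra F G) (he : IsIdempotentElem e) (hne : e ≠ 0)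
    (hprim : ∀ f g : MonoidAlgebra F G, IsIdempotentElem f → IsIdempotentElem g →
      f * g = 0 → g * f = 0 → e = f + g → f = 0 ∨ g = 0)
    (C : Ideal (MonoidAlgebra F G)) (hC : C = Ideal.span {e})
    (hmin : IsAtom C)
    (w : G) (hw : orderOf w = Monoid.exponent G)
    (tw : ℕ) (htw : IsLeast {a : ℕ | 0 < a ∧ w ^ q ^ a = w} tw) :
    ∀ c ∈ C, c ≠ 0 → (Fintype.card G : ℝ) / (tw : ℝ) ≤ (c.coeff.support.card : ℝ) :=
  minimal_code_min_distance_bound_general F q hq G e he C hC hmin w hw tw htw
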